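/- arXiv:1411.1259 — 3 statements merged into one kernel-verified Lean document; each statement's English description precedes it below -/
import Mathlib

section
/- Let f : [a,b] → ℝ (a < b) be continuous on [a,b], with f nonnegative. Define F(t) = (1/(b-t))·∫_t^b f(s) ds − (1/(t-a))·∫_a^t f(s) ds for t ∈ (a,b), extended by F(a) = (1/(b-a))∫_a^b f − f(a) and F(b) = f(b) − (1/(b-a))∫_a^b f. Then there exists x ∈ (a,b) such that, setting M = (b-a)/2 + |x − (a+b)/2| and m = (b-a)/2 − |x − (a+b)/2|, one has ((b-a)²/(2M²))·[(1/(b-a))∫_a^b f(s) ds − (M²/((x-a)(b-x)))·f(x)] ≤ (f(a)+f(b))/2 − (1/(b-a))∫_a^b f(s) ds ≤ ((b-a)²/(2m²))·[(1/(b-a))∫_a^b f(s) ds − (m²/((x-a)(b-x)))·f(x)]. -/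
open Set intervalIntegral MeasureTheory

lemma aux_alg1 (u J T M P y : ℝ) (hM : M ≠ 0) (hP : P ≠ 0) (hu : u ≠ 0) :
    u^2/(2*M^2) * ((1/u) * (J - u*((M^2/P)*y)))
      = T - (y - (P*(J/u)/M^2 - 2*P*T/u^2)) * (u^2/(2*P)) := by
  field_simp
  ring

lemma aux_alg2 (u J T M P y : ℝ) (hM : M ≠ 0) (hP : P ≠ 0) (hu : u ≠ 0) :
    u^2/(2*M^2) * ((1/u) * (J - u*((M^2/P)*y)))
      = T + ((P*(J/u)/M^2 - 2*P*T/u^2) - y) * (u^2/(2*P)) := by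
  field_simp
  ring


noncomputable def auxLo (a b avg T x : ℝ) : ℝ :=
  (x-a)*(b-x) * avg / ((b-a)/2 + |x-(a+b)/2|)^2 - 2*((x-a)*(b-x))*T/(b-a)^2

noncomputable def auxUp (a b avg T x : ℝ) : ℝ :=
  (x-a)*(b-x) * avg / ((b-a)/2 - |x-(a+b)/2|)^2 - 2*((x-a)*(b-x))*T/(b-a)^2

lemma aux_step1 (f : ℝ → ℝ) (a b avg T : ℝ) (hab : a < b)
    (hf : ContinuousOn f (Set.Icc a b))
    (hpos : ∀ t ∈ Set.Icc a b, 0 ≤ f t) (hIpos : 0 < avg) :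
    ∃ x ∈ Set.Ioo a b, f x < auxUp a b avg T x := by
  have hL : (0:ℝ) < b - a := sub_pos.2 hab
  obtain ⟨tm, htm, hmax⟩ := isCompact_Icc.exists_isMaxOn ⟨a, Set.left_mem_Icc.2 hab.le⟩ hf
  have hC0 : 0 ≤ f tm := hpos tm htm
  have hK0 : 0 < f tm + |T|/2 + 1 := by have := abs_nonneg T; linarith
  obtain ⟨δ, hδ0, hδ1, hδ2⟩ : ∃ δ : ℝ, 0 < δ ∧ δ ≤ (b-a)/4 ∧
      δ * (f tm + |T|/2 + 1) ≤ avg * ((b-a)/2) := by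
    refine ⟨min ((b-a)/4) (avg * ((b-a)/2) / (f tm + |T|/2 + 1)),
      lt_min (by linarith) (div_pos (mul_pos hIpos (by linarith)) hK0), min_le_left _ _, ?_⟩
    calc min ((b-a)/4) (avg * ((b-a)/2) / (f tm + |T|/2 + 1)) * (f tm + |T|/2 + 1)
        ≤ (avg * ((b-a)/2) / (f tm + |T|/2 + 1)) * (f tm + |T|/2 + 1) :=
          mul_le_mul_of_nonneg_right (min_le_right _ _) hK0.le
      _ = avg * ((b-a)/2) := div_mul_cancel₀ _ (ne_of_gt hK0)
  refine ⟨b - δ, ⟨by linarith, by linarith⟩, ?_⟩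
  have hxI : b - δ ∈ Set.Ioo a b := ⟨by linarith, by linarith⟩
  have habs : |(b - δ) - (a+b)/2| = (b - δ) - (a+b)/2 := abs_of_nonneg (by linarith)
  have hfx : f (b - δ) ≤ f tm := hmax (Set.Ioo_subset_Icc_self hxI)
  have hxa : (b-a)/2 ≤ (b - δ) - a := by linarith
  have hUp : auxUp a b avg T (b - δ)
      = ((b - δ)-a)*avg/δ - 2*(((b - δ)-a)*δ)*T/(b-a)^2 := by
    unfold auxUp
    rw [habs]
    rw [show (b-a)/2 - ((b - δ) - (a+b)/2) = δ by ring,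
        show b - (b - δ) = δ by ring]
    field_simp
  have h1 : f tm + |T|/2 + 1 ≤ ((b - δ)-a)*avg/δ := by
    rw [le_div_iff₀ hδ0]
    calc (f tm + |T|/2 + 1) * δ = δ * (f tm + |T|/2 + 1) := by ring
      _ ≤ avg * ((b-a)/2) := hδ2
      _ ≤ avg * ((b - δ) - a) := mul_le_mul_of_nonneg_left hxa hIpos.le
      _ = ((b - δ)-a)*avg := by ring
  have h2 : 2*(((b - δ)-a)*δ)*T/(b-a)^2 ≤ |T|/2 := by
    rw [div_le_iff₀ (by positivity)]
    have hP1 : ((b - δ)-a)*δ ≤ (b-a)^2/4 := by nlinarith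
    have hP0 : (0:ℝ) ≤ ((b - δ)-a)*δ := by nlinarith
    nlinarith [mul_le_mul_of_nonneg_left (le_abs_self T) hP0,
      mul_le_mul_of_nonneg_right hP1 (abs_nonneg T)]
  rw [hUp]
  linarith

lemma aux_intP (a b : ℝ) : ∫ x in a..b, (x - a) * (b - x) = (b - a)^3 / 6 := by
  have h : ∀ x : ℝ, HasDerivAt (fun y => -y^3/3 + (a+b)*y^2/2 - a*b*y) ((x-a)*(b-x)) x := by
    intro x
    have h1 : HasDerivAt (fun y : ℝ => -y^3/3 + (a+b)*y^2/2 - a*b*y)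
        (-(3*x^2)/3 + (a+b)*(2*x)/2 - a*b) x := by
      have p3 : HasDerivAt (fun y : ℝ => y^3) (3*x^2) x := by simpa using hasDerivAt_pow 3 x
      have p2 : HasDerivAt (fun y : ℝ => y^2) (2*x) x := by simpa using hasDerivAt_pow 2 x
      have pid : HasDerivAt (fun y : ℝ => a*b*y) (a*b) x := by
        simpa using (hasDerivAt_id x).const_mul (a*b)
      exact ((p3.neg.div_const 3).add ((p2.const_mul ((a+b))).div_const 2)).sub pid
    convert h1 using 1; ring
  rw [intervalIntegral.integral_eq_sub_of_hasDerivAt (fun x _ => h x)]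
  · ring
  · exact (Continuous.intervalIntegrable (by continuity) a b)

lemma aux_step2 (f : ℝ → ℝ) (a b avg T : ℝ) (hab : a < b)
    (hf : ContinuousOn f (Set.Icc a b))
    (havg : avg = (∫ s in a..b, f s)/(b-a))
    (hT : -avg ≤ T) (hIpos : 0 < avg) :
    ∃ x ∈ Set.Ioo a b, auxLo a b avg T x ≤ f x := by
  have hL : (0:ℝ) < b - a := sub_pos.2 hab
  by_contra hno
  push_neg at hno
  have hDpos : ∀ u ∈ Set.Ioo a b, 0 < avg*6/(b-a)^2 * ((u-a)*(b-u)) - f u := by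
    intro u hu
    have hflt : f u < auxLo a b avg T u := hno u hu
    have hP : (0:ℝ) ≤ (u-a)*(b-u) := by nlinarith [hu.1, hu.2]
    have hLole : auxLo a b avg T u ≤ avg*6/(b-a)^2 * ((u-a)*(b-u)) := by
      unfold auxLo
      have hM2 : ((b-a)/2)^2 ≤ ((b-a)/2 + |u-(a+b)/2|)^2 := by
        nlinarith [abs_nonneg (u-(a+b)/2)]
      have h1 : avg / ((b-a)/2 + |u-(a+b)/2|)^2 ≤ avg / (((b-a)/2)^2) :=
        div_le_div_of_nonneg_left hIpos.le (by positivity) hM2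
      have h1' : avg / (((b-a)/2)^2) = 4*avg/(b-a)^2 := by
        rw [div_eq_div_iff (by positivity) (by positivity)]
        ring
      have h5 : (0:ℝ) < (b-a)^2 := by positivity
      have h7 : (u-a)*(b-u) * (avg / ((b-a)/2 + |u-(a+b)/2|)^2)
          ≤ (u-a)*(b-u) * (4*avg/(b-a)^2) :=
        mul_le_mul_of_nonneg_left (h1.trans_eq h1') hP
      have h6 : 2*((u-a)*(b-u))*(-T)/(b-a)^2 ≤ 2*((u-a)*(b-u))*avg/(b-a)^2 := by
        apply div_le_div_of_nonneg_right ?_ h5.le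
        nlinarith
      calc (u-a)*(b-u) * avg / ((b-a)/2 + |u-(a+b)/2|)^2 - 2*((u-a)*(b-u))*T/(b-a)^2
          = (u-a)*(b-u) * (avg / ((b-a)/2 + |u-(a+b)/2|)^2)
            + 2*((u-a)*(b-u))*(-T)/(b-a)^2 := by ring
        _ ≤ (u-a)*(b-u) * (4*avg/(b-a)^2) + 2*((u-a)*(b-u))*avg/(b-a)^2 := by linarith
        _ = avg*6/(b-a)^2 * ((u-a)*(b-u)) := by ring
    linarith
  have hcp : Continuous (fun u : ℝ => avg*6/(b-a)^2 * ((u-a)*(b-u))) :=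
    continuous_const.mul ((continuous_id.sub continuous_const).mul
      (continuous_const.sub continuous_id))
  have hfint : IntervalIntegrable f volume a b := by
    apply ContinuousOn.intervalIntegrable
    rwa [Set.uIcc_of_le hab.le]
  have hpint : IntervalIntegrable (fun u : ℝ => avg*6/(b-a)^2 * ((u-a)*(b-u))) volume a b :=
    hcp.intervalIntegrable a b
  have hDint : IntervalIntegrable
      (fun u : ℝ => avg*6/(b-a)^2 * ((u-a)*(b-u)) - f u) volume a b := hpint.sub hfint
  have hDI : ∫ u in a..b, (avg*6/(b-a)^2 * ((u-a)*(b-u)) - f u) = 0 := by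
    rw [intervalIntegral.integral_sub hpint hfint]
    rw [intervalIntegral.integral_const_mul, aux_intP, havg]
    field_simp
    ring
  have := intervalIntegral_pos_of_pos_on hDint hDpos hab
  rw [hDI] at this
  exact lt_irrefl 0 this

lemma aux_exists (f : ℝ → ℝ) (a b avg T : ℝ) (hab : a < b)
    (hf : ContinuousOn f (Set.Icc a b))
    (hpos : ∀ t ∈ Set.Icc a b, 0 ≤ f t)
    (havg : avg = (∫ s in a..b, f s)/(b-a))
    (hT : -avg ≤ T) (hIpos : 0 < avg) :
    ∃ x ∈ Set.Ioo a b, auxLo a b avg T x ≤ f x ∧ f x ≤ auxUp a b avg T x := by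
  have hL : (0:ℝ) < b - a := sub_pos.2 hab
  have hMge : ∀ x : ℝ, (b-a)/2 ≤ (b-a)/2 + |x-(a+b)/2| := fun x => by
    have := abs_nonneg (x-(a+b)/2); linarith
  have hMpos : ∀ x : ℝ, 0 < (b-a)/2 + |x-(a+b)/2| := fun x => lt_of_lt_of_le (by linarith) (hMge x)
  have hmpos : ∀ x ∈ Set.Ioo a b, 0 < (b-a)/2 - |x-(a+b)/2| := by
    intro x hx
    have : |x-(a+b)/2| < (b-a)/2 := abs_lt.2 ⟨by linarith [hx.1, hx.2], by linarith [hx.1, hx.2]⟩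
    linarith
  have hPpos : ∀ x ∈ Set.Ioo a b, 0 < (x-a)*(b-x) := fun x hx =>
    mul_pos (by linarith [hx.1]) (by linarith [hx.2])
  by_contra hcon
  push_neg at hcon
  obtain ⟨x₁, hx₁, hx₁'⟩ := aux_step1 f a b avg T hab hf hpos hIpos
  obtain ⟨x₀, hx₀, hx₀'⟩ := aux_step2 f a b avg T hab hf havg hT hIpos
  have hnum : Continuous (fun x : ℝ => (x-a)*(b-x) * avg) :=
    ((continuous_id.sub continuous_const).mul (continuous_const.sub continuous_id)).mul
      continuous_const
  have hMcont : Continuous (fun x : ℝ => ((b-a)/2 + |x-(a+b)/2|)^2) :=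
    (continuous_const.add (continuous_id.sub continuous_const).abs).pow 2
  have hmcont : Continuous (fun x : ℝ => ((b-a)/2 - |x-(a+b)/2|)^2) :=
    (continuous_const.sub (continuous_id.sub continuous_const).abs).pow 2
  have htail : Continuous (fun x : ℝ => 2*((x-a)*(b-x))*T/(b-a)^2) :=
    (((continuous_const.mul ((continuous_id.sub continuous_const).mul
      (continuous_const.sub continuous_id))).mul continuous_const).div_const _)
  have hLoCont : ContinuousOn (fun x => f x - auxLo a b avg T x) (Set.Ioo a b) := by
    unfold auxLo
    apply ContinuousOn.sub (hf.mono Set.Ioo_subset_Icc_self)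
    apply ContinuousOn.sub _ htail.continuousOn
    exact ContinuousOn.div hnum.continuousOn hMcont.continuousOn
      (fun x _ => pow_ne_zero 2 (ne_of_gt (hMpos x)))
  have hUpCont : ContinuousOn (fun x => auxUp a b avg T x - f x) (Set.Ioo a b) := by
    unfold auxUp
    apply ContinuousOn.sub _ (hf.mono Set.Ioo_subset_Icc_self)
    apply ContinuousOn.sub _ htail.continuousOn
    exact ContinuousOn.div hnum.continuousOn hmcont.continuousOn
      (fun x hx => pow_ne_zero 2 (ne_of_gt (hmpos x hx)))
  have hu : IsOpen (Set.Ioo a b ∩ (fun x => f x - auxLo a b avg T x) ⁻¹' Set.Iio 0) :=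
    hLoCont.isOpen_inter_preimage isOpen_Ioo isOpen_Iio
  have hv : IsOpen (Set.Ioo a b ∩ (fun x => auxUp a b avg T x - f x) ⁻¹' Set.Iio 0) :=
    hUpCont.isOpen_inter_preimage isOpen_Ioo isOpen_Iio
  obtain ⟨y, hy⟩ := (isPreconnected_Ioo : IsPreconnected (Set.Ioo a b)) _ _ hu hv
    (by
      intro x hx
      rcases lt_or_ge (f x - auxLo a b avg T x) 0 with h | h
      · exact Or.inl ⟨hx, h⟩
      · refine Or.inr ⟨hx, ?_⟩
        have := hcon x hx (by linarith)
        simpa using by linarith)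
    ⟨x₁, hx₁, ⟨hx₁, by
      have := hcon x₁ hx₁
      by_contra hcontra
      simp only [Set.mem_preimage, Set.mem_Iio, not_lt] at hcontra
      have h2 := this (by linarith)
      linarith⟩⟩
    ⟨x₀, hx₀, ⟨hx₀, by
      simp only [Set.mem_preimage, Set.mem_Iio]
      have := hcon x₀ hx₀ hx₀'
      linarith⟩⟩
  obtain ⟨hyI, ⟨-, hy1⟩, ⟨-, hy2⟩⟩ := hy
  simp only [Set.mem_preimage, Set.mem_Iio] at hy1 hy2
  have hLoUp : auxLo a b avg T y ≤ auxUp a b avg T y := by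
    unfold auxLo auxUp
    have h1 : avg / ((b-a)/2 + |y-(a+b)/2|)^2 ≤ avg / ((b-a)/2 - |y-(a+b)/2|)^2 := by
      apply div_le_div_of_nonneg_left hIpos.le (pow_pos (hmpos y hyI) 2)
      have := hmpos y hyI
      nlinarith [abs_nonneg (y-(a+b)/2)]
    have hP := (hPpos y hyI).le
    calc (y-a)*(b-y) * avg / ((b-a)/2 + |y-(a+b)/2|)^2 - 2*((y-a)*(b-y))*T/(b-a)^2
        = (y-a)*(b-y) * (avg / ((b-a)/2 + |y-(a+b)/2|)^2) - 2*((y-a)*(b-y))*T/(b-a)^2 := by ring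
      _ ≤ (y-a)*(b-y) * (avg / ((b-a)/2 - |y-(a+b)/2|)^2) - 2*((y-a)*(b-y))*T/(b-a)^2 := by
          have := mul_le_mul_of_nonneg_left h1 hP; linarith
      _ = (y-a)*(b-y) * avg / ((b-a)/2 - |y-(a+b)/2|)^2 - 2*((y-a)*(b-y))*T/(b-a)^2 := by ring
  linarith

lemma aux_zero (f : ℝ → ℝ) (a b : ℝ) (hab : a < b) (hf : ContinuousOn f (Set.Icc a b))
    (hpos : ∀ t ∈ Set.Icc a b, 0 ≤ f t) (hI : ∫ s in a..b, f s = 0) :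
    ∀ t ∈ Set.Icc a b, f t = 0 := by
  have hint : IntervalIntegrable f volume a b := by
    apply ContinuousOn.intervalIntegrable
    rwa [Set.uIcc_of_le hab.le]
  have hnn : 0 ≤ᵐ[volume.restrict (Set.Ioc a b)] f := by
    rw [Filter.EventuallyLE, ae_restrict_iff' measurableSet_Ioc]
    filter_upwards with t ht using hpos t ⟨ht.1.le, ht.2⟩
  have h0 : f =ᵐ[volume.restrict (Set.Ioc a b)] 0 :=
    (intervalIntegral.integral_eq_zero_iff_of_le_of_nonneg_ae hab.le hnn hint).1 hI
  have h0' : f =ᵐ[volume.restrict (Set.Icc a b)] 0 := by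
    rwa [Measure.restrict_congr_set MeasureTheory.Ioc_ae_eq_Icc] at h0
  have := MeasureTheory.Measure.eqOn_of_ae_eq h0' hf continuousOn_const
    (by rw [interior_Icc, closure_Ioo hab.ne])
  exact fun t ht => this ht

set_option maxHeartbeats 1000000 in
theorem trapezoid_double_inequality (f : ℝ → ℝ) (a b : ℝ) (hab : a < b)
    (hf : ContinuousOn f (Set.Icc a b))
    (hpos : ∀ t ∈ Set.Icc a b, 0 ≤ f t) :
    ∃ x ∈ Set.Ioo a b,
      ((b - a) ^ 2 / (2 * ((b - a) / 2 + |x - (a + b) / 2|) ^ 2)) *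
          ((1 / (b - a)) * ∫ s in a..b, f s -
            (((b - a) / 2 + |x - (a + b) / 2|) ^ 2 / ((x - a) * (b - x))) * f x)
        ≤ (f a + f b) / 2 - (1 / (b - a)) * ∫ s in a..b, f s ∧
      (f a + f b) / 2 - (1 / (b - a)) * ∫ s in a..b, f s
        ≤ ((b - a) ^ 2 / (2 * ((b - a) / 2 - |x - (a + b) / 2|) ^ 2)) *
          ((1 / (b - a)) * ∫ s in a..b, f s -
            (((b - a) / 2 - |x - (a + b) / 2|) ^ 2 / ((x - a) * (b - x))) * f x) := by
  have hL : (0:ℝ) < b - a := sub_pos.2 hab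
  have hfint : IntervalIntegrable f volume a b := by
    apply ContinuousOn.intervalIntegrable
    rwa [Set.uIcc_of_le hab.le]
  have expand : ∀ c : ℝ, (∫ s in a..b, (f s - c)) = (∫ s in a..b, f s) - (b-a)*c := by
    intro c
    rw [intervalIntegral.integral_sub hfint (intervalIntegrable_const),
      intervalIntegral.integral_const]
    simp [smul_eq_mul]
  have hInn : 0 ≤ ∫ s in a..b, f s := intervalIntegral.integral_nonneg hab.le hpos
  rcases hInn.eq_or_lt with h0 | hIpos
  · -- zero integral case : f vanishes on [a,b]
    have hz := aux_zero f a b hab hf hpos h0.symm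
    have hI0 : (∫ s in a..b, f s) = 0 := h0.symm
    refine ⟨(a+b)/2, ⟨by linarith, by linarith⟩, ?_⟩
    rw [expand, expand, hI0, hz a (Set.left_mem_Icc.2 hab.le),
      hz b (Set.right_mem_Icc.2 hab.le), hz ((a+b)/2) ⟨by linarith, by linarith⟩]
    norm_num
  · -- main case
    obtain ⟨x, hx, hg, hh⟩ := aux_exists f a b ((∫ s in a..b, f s)/(b-a))
      ((f a + f b)/2 - (∫ s in a..b, f s)/(b-a)) hab hf hpos
      rfl (by
        have ha0 := hpos a (Set.left_mem_Icc.2 hab.le)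
        have hb0 := hpos b (Set.right_mem_Icc.2 hab.le)
        linarith)
      (div_pos hIpos hL)
    have hMpos : 0 < (b-a)/2 + |x-(a+b)/2| := by
      have := abs_nonneg (x-(a+b)/2); linarith
    have hmpos : 0 < (b-a)/2 - |x-(a+b)/2| := by
      have : |x-(a+b)/2| < (b-a)/2 :=
        abs_lt.2 ⟨by linarith [hx.1, hx.2], by linarith [hx.1, hx.2]⟩
      linarith
    have hPpos : 0 < (x-a)*(b-x) := mul_pos (by linarith [hx.1]) (by linarith [hx.2])
    unfold auxLo at hg
    unfold auxUp at hh
    refine ⟨x, hx, ?_, ?_⟩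
    · rw [expand, aux_alg1 (b-a) (∫ s in a..b, f s)
        ((f a + f b)/2 - (∫ s in a..b, f s)/(b-a))
        ((b - a) / 2 + |x - (a + b) / 2|) ((x - a) * (b - x)) (f x)
        hMpos.ne' hPpos.ne' hL.ne']
      have hc : (0:ℝ) < (b-a)^2/(2*((x-a)*(b-x))) := by positivity
      have hfac := mul_nonneg (sub_nonneg.2 hg) hc.le
      have hq : (1 / (b - a)) * (∫ s in a..b, f s) = (∫ s in a..b, f s)/(b-a) := by ring
      nlinarith [hfac]
    · rw [expand, aux_alg2 (b-a) (∫ s in a..b, f s)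
        ((f a + f b)/2 - (∫ s in a..b, f s)/(b-a))
        ((b - a) / 2 - |x - (a + b) / 2|) ((x - a) * (b - x)) (f x)
        hmpos.ne' hPpos.ne' hL.ne']
      have hc : (0:ℝ) < (b-a)^2/(2*((x-a)*(b-x))) := by positivity
      have hfac := mul_nonneg (sub_nonneg.2 hh) hc.le
      have hq : (1 / (b - a)) * (∫ s in a..b, f s) = (∫ s in a..b, f s)/(b-a) := by ring
      nlinarith [hfac]
end

section
/- Let f : ℝ → ℝ be continuous on [a,b] with a < b, and define F(t) = (1/(b-t))·∫_t^b f(s) ds − (1/(t-a))·∫_a^t f(s) ds on (a,b), extended continuously by F(a) = (1/(b-a))∫_a^b f − f(a) and F(b) = f(b) − (1/(b-a))∫_a^b f. Then there exists x ∈ (a,b) such that (1/(b-x)²)·∫_x^b f(s) ds + (1/(x-a)²)·∫_a^x f(s) ds − ((b-a)·f(x))/((x-a)(b-x)) = (2/(b-a))·[(f(a)+f(b))/2 − (1/(b-a))·∫_a^b f(s) ds]. -/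
/-!
With `Φ u = ∫ s in a..u, f s`, the auxiliary function is `F t = slope Φ b t - slope Φ a t`.
Since `Φ` is differentiable on `[a, b]` with derivative `f` (one-sided at the endpoints), `F`
tends to `slope Φ a b - f a` at `a⁺` and to `f b - slope Φ a b` at `b⁻`, so the mean value theorem
for functions with one-sided limits yields `c` with `F' c` equal to the slope of these limits.
-/

open Set Filter Topology intervalIntegral

theorem exists_hasDerivAt_eq_slope_of_tendsto {f f' : ℝ → ℝ} {a b la lb : ℝ} (hab : a < b)
    (hff' : ∀ x ∈ Ioo a b, HasDerivAt f (f' x) x)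
    (hfa : Tendsto f (𝓝[>] a) (𝓝 la)) (hfb : Tendsto f (𝓝[<] b) (𝓝 lb)) :
    ∃ c ∈ Ioo a b, f' c = (lb - la) / (b - a) := by
  obtain ⟨c, hc, h⟩ := exists_ratio_hasDerivAt_eq_ratio_slope' f f' hab id 1 hff'
    (fun x _ => hasDerivAt_id x) hfa (tendsto_id.mono_left inf_le_left) hfb
    (tendsto_id.mono_left inf_le_left)
  refine ⟨c, hc, ?_⟩
  rw [eq_div_iff (sub_ne_zero.2 hab.ne'), mul_comm]
  simpa using h

theorem HasDerivAt.hasDerivAt_slope {Φ : ℝ → ℝ} {φ c t : ℝ} (h : HasDerivAt Φ φ t)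
    (ht : t ≠ c) : HasDerivAt (slope Φ c) ((φ - slope Φ c t) / (t - c)) t := by
  have htc : t - c ≠ 0 := sub_ne_zero.2 ht
  rw [slope_fun_def_field]
  refine ((h.sub_const (Φ c)).fun_div ((hasDerivAt_id' t).sub_const c) htc).congr_deriv ?_
  field_simp

theorem ContinuousWithinAt.tendsto_slope {Φ : ℝ → ℝ} {s : Set ℝ} {c x : ℝ}
    (h : ContinuousWithinAt Φ s x) (hx : x ≠ c) :
    Tendsto (slope Φ c) (𝓝[s] x) (𝓝 (slope Φ c x)) := by
  rw [slope_fun_def_field]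
  exact (h.sub continuousWithinAt_const).div (continuousWithinAt_id.sub continuousWithinAt_const)
    (sub_ne_zero.2 hx)

theorem exists_hasDerivAt_slope_sub_slope_eq {Φ φ : ℝ → ℝ} {a b φa φb : ℝ} (hab : a < b)
    (hΦ : ∀ x ∈ Ioo a b, HasDerivAt Φ (φ x) x)
    (hΦa : HasDerivWithinAt Φ φa (Ioi a) a) (hΦb : HasDerivWithinAt Φ φb (Iio b) b) :
    ∃ c ∈ Ioo a b, (φ c - slope Φ b c) / (c - b) - (φ c - slope Φ a c) / (c - a)
      = (φa + φb - 2 * slope Φ a b) / (b - a) := by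
  have hlim_a : Tendsto (fun t => slope Φ b t - slope Φ a t) (𝓝[>] a)
      (𝓝 (slope Φ a b - φa)) := by
    rw [slope_comm Φ a b]
    exact (hΦa.continuousWithinAt.tendsto_slope hab.ne).sub
      ((hasDerivWithinAt_iff_tendsto_slope' self_notMem_Ioi).1 hΦa)
  have hlim_b : Tendsto (fun t => slope Φ b t - slope Φ a t) (𝓝[<] b)
      (𝓝 (φb - slope Φ a b)) :=
    ((hasDerivWithinAt_iff_tendsto_slope' self_notMem_Iio).1 hΦb).sub
      (hΦb.continuousWithinAt.tendsto_slope hab.ne')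
  obtain ⟨c, hc, h⟩ := exists_hasDerivAt_eq_slope_of_tendsto hab
    (fun x hx => ((hΦ x hx).hasDerivAt_slope hx.2.ne).sub ((hΦ x hx).hasDerivAt_slope hx.1.ne'))
    hlim_a hlim_b
  exact ⟨c, hc, h.trans (by ring_nf)⟩

theorem ContinuousOn.hasDerivWithinAt_integral_Icc {E : Type*} [NormedAddCommGroup E]
    [NormedSpace ℝ E] [CompleteSpace E] {f : ℝ → E} {a b x : ℝ}
    (hf : ContinuousOn f (Icc a b)) (hx : x ∈ Icc a b) :
    HasDerivWithinAt (fun u => ∫ t in a..u, f t) (f x) (Icc a b) x := by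
  have : Fact (x ∈ Icc a b) := ⟨hx⟩
  exact integral_hasDerivWithinAt_right
    ((hf.mono (Icc_subset_Icc_right hx.2)).intervalIntegrable_of_Icc hx.1)
    (hf.stronglyMeasurableAtFilter_nhdsWithin measurableSet_Icc x) (hf x hx)

theorem mvt_for_auxiliary_F (f : ℝ → ℝ) (a b : ℝ) (hab : a < b)
    (hf : ContinuousOn f (Set.Icc a b)) :
    ∃ x ∈ Set.Ioo a b,
      (1 / (b - x) ^ 2) * (∫ s in x..b, f s) +
          (1 / (x - a) ^ 2) * (∫ s in a..x, f s) -
          ((b - a) * f x) / ((x - a) * (b - x))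
        = (2 / (b - a)) *
            ((f a + f b) / 2 - (1 / (b - a)) * ∫ s in a..b, f s) := by
  set Φ : ℝ → ℝ := fun u => ∫ s in a..u, f s
  have hΦ : ∀ x ∈ Icc a b, HasDerivWithinAt Φ (f x) (Icc a b) x :=
    fun x hx => hf.hasDerivWithinAt_integral_Icc hx
  obtain ⟨x, hx, h⟩ := exists_hasDerivAt_slope_sub_slope_eq hab
    (fun x hx => (hΦ x (Ioo_subset_Icc_self hx)).hasDerivAt (Icc_mem_nhds hx.1 hx.2))
    ((hΦ a (left_mem_Icc.2 hab.le)).mono_of_mem_nhdsWithin (Icc_mem_nhdsGT hab))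
    ((hΦ b (right_mem_Icc.2 hab.le)).mono_of_mem_nhdsWithin (Icc_mem_nhdsLT hab))
  refine ⟨x, hx, ?_⟩
  have hsplit : ∫ s in x..b, f s = Φ b - Φ x :=
    (integral_interval_sub_left (hf.intervalIntegrable_of_Icc hab.le)
      ((hf.mono (Icc_subset_Icc_right hx.2.le)).intervalIntegrable_of_Icc hx.1.le)).symm
  have hxa : x - a ≠ 0 := sub_ne_zero.2 hx.1.ne'
  have hxb : x - b ≠ 0 := sub_ne_zero.2 hx.2.ne
  have hbx : b - x ≠ 0 := sub_ne_zero.2 hx.2.ne'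
  rw [hsplit]
  convert h using 1 <;> simp only [Φ, slope_def_field, integral_same] <;> field_simp <;> ring
end

section
/- Let 0 < a < b, G = √(ab), A = (a+b)/2, M = (b-a)/2 + (A − G) and m = (b-a)/2 − (A − G). Then ((b-a)²/(2M²))·[1 − M²/((G−a)(b−G))] ≤ G²·(1/2)·(1/a² + 1/b²) − 1 ≤ ((b-a)²/(2m²))·[1 − m²/((G−a)(b−G))], where G²·(1/2)(1/a²+1/b²) = G²(a,b)/H(a²,b²). -/
theorem trapezoid_inequality_inv_sq_means (a b : ℝ) (ha : 0 < a) (hab : a < b)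
    (G A M m : ℝ) (hG : G = Real.sqrt (a * b)) (hA : A = (a + b) / 2)
    (hM : M = (b - a) / 2 + (A - G)) (hm : m = (b - a) / 2 - (A - G)) :
    ((b - a) ^ 2 / (2 * M ^ 2)) * (1 - M ^ 2 / ((G - a) * (b - G)))
        ≤ a * b * (1 / a ^ 2 + 1 / b ^ 2) / 2 - 1 ∧
    a * b * (1 / a ^ 2 + 1 / b ^ 2) / 2 - 1
        ≤ ((b - a) ^ 2 / (2 * m ^ 2)) * (1 - m ^ 2 / ((G - a) * (b - G))) := by
  have hb : 0 < b := ha.trans hab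
  set x := Real.sqrt a with hx
  set y := Real.sqrt b with hy
  have hx0 : 0 < x := Real.sqrt_pos.mpr ha
  have hy0 : 0 < y := Real.sqrt_pos.mpr hb
  have hxy : x < y := Real.sqrt_lt_sqrt ha.le hab
  have hax : a = x ^ 2 := (Real.sq_sqrt ha.le).symm
  have hby : b = y ^ 2 := (Real.sq_sqrt hb.le).symm
  have hGv : G = x * y := by rw [hG, Real.sqrt_mul ha.le]
  have hMv : M = y * (y - x) := by rw [hM, hA, hGv, hax, hby]; ring
  have hmv : m = x * (y - x) := by rw [hm, hA, hGv, hax, hby]; ring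
  have hd : 0 < y - x := by linarith
  have hxne : x ≠ 0 := hx0.ne'
  have hyne : y ≠ 0 := hy0.ne'
  have hdne : y - x ≠ 0 := hd.ne'
  have hmid : x ^ 2 * y ^ 2 * (1 / (x ^ 2) ^ 2 + 1 / (y ^ 2) ^ 2) / 2 - 1
      = (y ^ 2 - x ^ 2) ^ 2 / (2 * x ^ 2 * y ^ 2) := by
    field_simp; ring
  constructor
  · rw [hax, hby, hMv, hGv, hmid]
    have e1 : (y * (y - x)) ^ 2 / ((x * y - x ^ 2) * (y ^ 2 - x * y)) = y / x := by
      rw [show (x * y - x ^ 2) * (y ^ 2 - x * y) = x * y * (y - x) ^ 2 by ring]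
      field_simp
    rw [e1]
    have h1 : ((y ^ 2 - x ^ 2) ^ 2 / (2 * (y * (y - x)) ^ 2)) * (1 - y / x) ≤ 0 := by
      apply mul_nonpos_of_nonneg_of_nonpos (by positivity)
      have : (1:ℝ) < y / x := (one_lt_div hx0).mpr hxy
      linarith
    have h2 : (0:ℝ) ≤ (y ^ 2 - x ^ 2) ^ 2 / (2 * x ^ 2 * y ^ 2) := by positivity
    linarith
  · rw [hax, hby, hmv, hGv, hmid]
    have e2 : (x * (y - x)) ^ 2 / ((x * y - x ^ 2) * (y ^ 2 - x * y)) = x / y := by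
      rw [show (x * y - x ^ 2) * (y ^ 2 - x * y) = x * y * (y - x) ^ 2 by ring]
      field_simp
    rw [e2]
    rw [show (1:ℝ) - x / y = (y - x) / y by field_simp]
    rw [div_mul_div_comm, div_le_div_iff₀ (by positivity) (by positivity)]
    nlinarith [mul_pos hx0 hy0, sq_nonneg (y - x), sq_nonneg (y + x),
      mul_pos (mul_pos hx0 hx0) (mul_pos hy0 hd), sq_nonneg (x*y - x*x),
      mul_nonneg (mul_nonneg hx0.le hx0.le) (mul_nonneg (sq_nonneg (y-x)) (mul_nonneg hy0.le hx0.le))]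
end
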